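/- arXiv:2306.01843 — 2 statements merged into one kernel-verified Lean document; each statement's English description precedes it below -/
import Mathlib

section
/- Let A(x) be a differentiable family of d×D real matrices of full rank d, and let P_A = A⁺A be the orthogonal projection onto the row space of A, where A⁺ = Aᵀ(AAᵀ)⁻¹. Then dP_A/dx = A⁺ (dA/dx)(I − A⁺A) + (A⁺ (dA/dx)(I − A⁺A))ᵀ. -/
open Matrix

private lemma matMulDeriv {m n p : ℕ} {M : ℝ → Matrix (Fin m) (Fin n) ℝ}
    {N : ℝ → Matrix (Fin n) (Fin p) ℝ} {M' : Matrix (Fin m) (Fin n) ℝ}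
    {N' : Matrix (Fin n) (Fin p) ℝ} {x : ℝ}
    (hM : ∀ i j, HasDerivAt (fun t => M t i j) (M' i j) x)
    (hN : ∀ i j, HasDerivAt (fun t => N t i j) (N' i j) x) :
    ∀ i j, HasDerivAt (fun t => (M t * N t) i j) ((M' * N x + M x * N') i j) x := by
  intro i j
  have h : HasDerivAt (fun t => ∑ k, M t i k * N t k j)
      (∑ k, (M' i k * N x k j + M x i k * N' k j)) x :=
    HasDerivAt.fun_sum fun k _ => (hM i k).mul (hN k j)
  simpa [Matrix.mul_apply, Matrix.add_apply, Finset.sum_add_distrib] using h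

private lemma matDetDiff {n : ℕ} {M : ℝ → Matrix (Fin n) (Fin n) ℝ} {x : ℝ}
    (hM : ∀ i j, DifferentiableAt ℝ (fun t => M t i j) x) :
    DifferentiableAt ℝ (fun t => (M t).det) x := by
  simp only [Matrix.det_apply']
  exact DifferentiableAt.fun_sum fun σ _ =>
    (DifferentiableAt.fun_finsetProd fun i _ => hM (σ i) i).const_mul _

private lemma matAdjDiff {n : ℕ} {M : ℝ → Matrix (Fin n) (Fin n) ℝ} {x : ℝ}
    (hM : ∀ i j, DifferentiableAt ℝ (fun t => M t i j) x) :
    ∀ i j, DifferentiableAt ℝ (fun t => (M t).adjugate i j) x := by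
  intro i j
  simp only [Matrix.adjugate_apply]
  apply matDetDiff
  intro a b
  rcases eq_or_ne a j with h | h
  · simp only [h, Matrix.updateRow_self]
    exact differentiableAt_const _
  · simp only [Matrix.updateRow_ne h]
    exact hM a b

private lemma matInvDeriv {n : ℕ} {M : ℝ → Matrix (Fin n) (Fin n) ℝ}
    {M' : Matrix (Fin n) (Fin n) ℝ} {x : ℝ}
    (hM : ∀ i j, HasDerivAt (fun t => M t i j) (M' i j) x)
    (hu : ∀ t, IsUnit (M t).det) :
    ∀ i j, HasDerivAt (fun t => (M t)⁻¹ i j)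
      ((-((M x)⁻¹ * M' * (M x)⁻¹)) i j) x := by
  have hdiff : ∀ i j, DifferentiableAt ℝ (fun t => (M t)⁻¹ i j) x := by
    intro i j
    have heq : (fun t => (M t)⁻¹ i j)
        = fun t => ((M t).det)⁻¹ * (M t).adjugate i j := by
      funext t
      rw [Matrix.inv_def, Ring.inverse_eq_inv']
      simp [Matrix.smul_apply]
    rw [heq]
    exact (((matDetDiff fun i j => (hM i j).differentiableAt).inv
      (hu x).ne_zero)).mul (matAdjDiff (fun i j => (hM i j).differentiableAt) i j)
  set C' : Matrix (Fin n) (Fin n) ℝ :=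
    Matrix.of fun i j => deriv (fun t => (M t)⁻¹ i j) x with hC'def
  have hC : ∀ i j, HasDerivAt (fun t => (M t)⁻¹ i j) (C' i j) x :=
    fun i j => (hdiff i j).hasDerivAt
  have hprod := matMulDeriv hM hC
  have hone : ∀ i j, HasDerivAt (fun t => (M t * (M t)⁻¹) i j) 0 x := by
    intro i j
    have heq : (fun t => (M t * (M t)⁻¹) i j) = fun _ => (1 : Matrix (Fin n) (Fin n) ℝ) i j := by
      funext t; rw [Matrix.mul_nonsing_inv _ (hu t)]
    rw [heq]; exact hasDerivAt_const _ _
  have hzero : M' * (M x)⁻¹ + M x * C' = 0 := by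
    ext i j
    simpa using (hprod i j).unique (hone i j)
  have hMC' : M x * C' = -(M' * (M x)⁻¹) := by
    rw [eq_neg_iff_add_eq_zero, add_comm]; exact hzero
  have hfinal : C' = -((M x)⁻¹ * M' * (M x)⁻¹) := by
    calc C' = (M x)⁻¹ * (M x * C') := by
            rw [← Matrix.mul_assoc, Matrix.nonsing_inv_mul _ (hu x), Matrix.one_mul]
      _ = -((M x)⁻¹ * M' * (M x)⁻¹) := by rw [hMC', Matrix.mul_neg, Matrix.mul_assoc]
  intro i j
  rw [← hfinal]
  exact hC i j

/-- Let `A(x)` be a differentiable family of `d×D` real matrices of full rank `d`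
(so `A Aᵀ` is invertible), and let `P_A = A⁺ A` be the orthogonal projection onto
the row space of `A`, where `A⁺ = Aᵀ (A Aᵀ)⁻¹`. Then, entrywise,
`dP_A/dx = A⁺ A' (I − A⁺A) + (A⁺ A' (I − A⁺A))ᵀ`. -/
theorem stmt_3 {d D : ℕ} (A : ℝ → Matrix (Fin d) (Fin D) ℝ)
    (A' : Matrix (Fin d) (Fin D) ℝ) (x : ℝ)
    (hA : ∀ i j, HasDerivAt (fun t => A t i j) (A' i j) x)
    (hrank : ∀ t, IsUnit (A t * (A t)ᵀ).det) :
    ∀ (i j : Fin D), HasDerivAt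
      (fun t => (((A t)ᵀ * (A t * (A t)ᵀ)⁻¹) * A t) i j)
      (((((A x)ᵀ * (A x * (A x)ᵀ)⁻¹) * A' * (1 - ((A x)ᵀ * (A x * (A x)ᵀ)⁻¹) * A x)) +
        ((((A x)ᵀ * (A x * (A x)ᵀ)⁻¹) * A' *
          (1 - ((A x)ᵀ * (A x * (A x)ᵀ)⁻¹) * A x)))ᵀ : Matrix (Fin D) (Fin D) ℝ) i j)
      x := by
  have hAT : ∀ i j, HasDerivAt (fun t => (A t)ᵀ i j) ((A'ᵀ) i j) x := by
    intro i j; simpa [Matrix.transpose_apply] using hA j i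
  have hB := matMulDeriv hA hAT
  have hC := matInvDeriv hB hrank
  have hEC := matMulDeriv hAT hC
  have hP := matMulDeriv hEC hA
  set E := A x with hE
  set C : Matrix (Fin d) (Fin d) ℝ := (E * Eᵀ)⁻¹ with hCdef
  have hCt : Cᵀ = C := by
    rw [hCdef, Matrix.transpose_nonsing_inv, Matrix.transpose_mul, Matrix.transpose_transpose]
  have key : (A'ᵀ * C + Eᵀ * (-(C * (A' * Eᵀ + E * A'ᵀ) * C))) * E + Eᵀ * C * A'
      = Eᵀ * C * A' * (1 - Eᵀ * C * E) + (Eᵀ * C * A' * (1 - Eᵀ * C * E))ᵀ := by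
    simp only [Matrix.mul_sub, Matrix.sub_mul, Matrix.mul_add, Matrix.add_mul,
      Matrix.transpose_sub, Matrix.transpose_mul, Matrix.transpose_one,
      Matrix.transpose_transpose, hCt, Matrix.mul_one, Matrix.one_mul,
      Matrix.neg_mul, Matrix.mul_neg, Matrix.mul_assoc]
    abel
  intro i j
  have h := hP i j
  rw [key] at h
  exact h
end

section
/- Let f : R^D → R^d and g : R^d → R^D be differentiable and suppose (f, g) is a critical point of the reconstruction loss, so that f ∘ g = id and (g(f(x)) − x)ᵀ g'(f(x)) = 0 for all x. Then for any x in the image of g, f'(x) equals the Moore–Penrose pseudoinverse of g'(f(x)), i.e. f'(x) = g'(f(x))⁺. -/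
open Matrix

/-- Let `f : ℝ^D → ℝ^d`, `g : ℝ^d → ℝ^D` be differentiable with `f ∘ g = id` and
`(g(f(y)) − y)ᵀ g'(f(y)) = 0` for all `y` (criticality of the reconstruction
loss). If the Jacobian `g'(f(x))` has full rank `d` and `x` lies on the manifold
(`g(f(x)) = x`), then `f'(x)` is the Moore–Penrose pseudoinverse of `g'(f(x))`:
`f'(x) = (g'(f(x))ᵀ g'(f(x)))⁻¹ g'(f(x))ᵀ`. -/
theorem stmt_16 {D d : ℕ}
    (f : (Fin D → ℝ) → (Fin d → ℝ)) (g : (Fin d → ℝ) → (Fin D → ℝ))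
    (hf : Differentiable ℝ f) (hg : Differentiable ℝ g)
    (hfg : f ∘ g = id)
    (horth : ∀ y : Fin D → ℝ,
      (g (f y) - y) ᵥ* (LinearMap.toMatrix' ((fderiv ℝ g (f y)) : (Fin d → ℝ) →ₗ[ℝ] (Fin D → ℝ))) = 0)
    (x : Fin D → ℝ) (hx : g (f x) = x)
    (hrank : IsUnit ((LinearMap.toMatrix' ((fderiv ℝ g (f x)) : (Fin d → ℝ) →ₗ[ℝ] (Fin D → ℝ)))ᵀ *
      (LinearMap.toMatrix' ((fderiv ℝ g (f x)) : (Fin d → ℝ) →ₗ[ℝ] (Fin D → ℝ)))).det) :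
    LinearMap.toMatrix' ((fderiv ℝ f x) : (Fin D → ℝ) →ₗ[ℝ] (Fin d → ℝ)) =
      ((LinearMap.toMatrix' ((fderiv ℝ g (f x)) : (Fin d → ℝ) →ₗ[ℝ] (Fin D → ℝ)))ᵀ *
        (LinearMap.toMatrix' ((fderiv ℝ g (f x)) : (Fin d → ℝ) →ₗ[ℝ] (Fin D → ℝ))))⁻¹ *
      (LinearMap.toMatrix' ((fderiv ℝ g (f x)) : (Fin d → ℝ) →ₗ[ℝ] (Fin D → ℝ)))ᵀ := by
  classical
  set G : Matrix (Fin D) (Fin d) ℝ :=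
    LinearMap.toMatrix' ((fderiv ℝ g (f x)) : (Fin d → ℝ) →ₗ[ℝ] (Fin D → ℝ)) with hGdef
  set F : Matrix (Fin d) (Fin D) ℝ :=
    LinearMap.toMatrix' ((fderiv ℝ f x) : (Fin D → ℝ) →ₗ[ℝ] (Fin d → ℝ)) with hFdef
  -- orthogonality in dot-product form
  have horth' : ∀ (y : Fin D → ℝ) (w : Fin d → ℝ),
      (g (f y) - y) ⬝ᵥ (fderiv ℝ g (f y) w) = 0 := by
    intro y w
    have h1 : (g (f y) - y) ᵥ*
        (LinearMap.toMatrix' ((fderiv ℝ g (f y)) : (Fin d → ℝ) →ₗ[ℝ] (Fin D → ℝ))) ⬝ᵥ w = 0 := by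
      rw [horth y]; simp
    rw [← Matrix.dotProduct_mulVec] at h1
    rwa [show (LinearMap.toMatrix' ((fderiv ℝ g (f y)) : (Fin d → ℝ) →ₗ[ℝ] (Fin D → ℝ))) *ᵥ w
        = fderiv ℝ g (f y) w by simp [← Matrix.toLin'_apply]] at h1
  -- S and its derivative
  set S : (Fin D → ℝ) → (Fin D → ℝ) := fun y => g (f y) - y with hSdef
  set S' : (Fin D → ℝ) → ((Fin D → ℝ) →L[ℝ] (Fin D → ℝ)) :=
    fun y => (fderiv ℝ g (f y)).comp (fderiv ℝ f y) - ContinuousLinearMap.id ℝ (Fin D → ℝ)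
    with hS'def
  have hS : ∀ y, HasFDerivAt S (S' y) y := by
    intro y
    exact (((hg (f y)).hasFDerivAt.comp y (hf y).hasFDerivAt)).sub (hasFDerivAt_id y)
  -- S ⬝ᵥ S' y v = - S ⬝ᵥ v by orthogonality
  have hkey : ∀ y (v : Fin D → ℝ), S y ⬝ᵥ S' y v = -(S y ⬝ᵥ v) := by
    intro y v
    have : S' y v = fderiv ℝ g (f y) (fderiv ℝ f y v) - v := rfl
    rw [this, dotProduct_sub, horth' y (fderiv ℝ f y v), zero_sub]
  -- the derivative of φ = fun y => S y ⬝ᵥ S y  is Φ ∘ S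
  set Φ : (Fin D → ℝ) →L[ℝ] ((Fin D → ℝ) →L[ℝ] ℝ) :=
    ∑ i : Fin D, ((-2 : ℝ) • (ContinuousLinearMap.proj i : (Fin D → ℝ) →L[ℝ] ℝ)).smulRight
      (ContinuousLinearMap.proj i : (Fin D → ℝ) →L[ℝ] ℝ) with hΦdef
  have hΦapp : ∀ (u v : Fin D → ℝ), Φ u v = -2 * (u ⬝ᵥ v) := by
    intro u v
    simp [hΦdef, dotProduct, Finset.mul_sum]
    ring_nf
  have hφ : ∀ y, HasFDerivAt (fun y => S y ⬝ᵥ S y) (Φ (S y)) y := by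
    intro y
    have hcoord : ∀ i : Fin D, HasFDerivAt (fun y => S y i)
        ((ContinuousLinearMap.proj i : (Fin D → ℝ) →L[ℝ] ℝ).comp (S' y)) y := by
      intro i
      exact (ContinuousLinearMap.proj i).hasFDerivAt.comp y (hS y)
    have hsum : HasFDerivAt (fun y => ∑ i, S y i * S y i)
        (∑ i : Fin D, (S y i • ((ContinuousLinearMap.proj i : (Fin D → ℝ) →L[ℝ] ℝ).comp (S' y))
          + S y i • ((ContinuousLinearMap.proj i : (Fin D → ℝ) →L[ℝ] ℝ).comp (S' y)))) y := by
      exact HasFDerivAt.fun_sum (fun i _ => (hcoord i).mul (hcoord i))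
    have heq : (∑ i : Fin D, (S y i • ((ContinuousLinearMap.proj i : (Fin D → ℝ) →L[ℝ] ℝ).comp (S' y))
          + S y i • ((ContinuousLinearMap.proj i : (Fin D → ℝ) →L[ℝ] ℝ).comp (S' y)))) = Φ (S y) := by
      ext v
      rw [hΦapp]
      have : ∀ i : Fin D, (S y i • ((ContinuousLinearMap.proj i : (Fin D → ℝ) →L[ℝ] ℝ).comp (S' y))
          + S y i • ((ContinuousLinearMap.proj i : (Fin D → ℝ) →L[ℝ] ℝ).comp (S' y))) v
          = 2 * (S y i * S' y v i) := by intro i; simp; ring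
      rw [ContinuousLinearMap.sum_apply]
      simp only [this]
      rw [← Finset.mul_sum]
      have : ∑ i : Fin D, S y i * S' y v i = S y ⬝ᵥ S' y v := rfl
      rw [this, hkey y v]
      ring
    rw [← heq]
    exact hsum
  -- differentiate the derivative at x
  have hΦS : HasFDerivAt (fun y => Φ (S y)) (Φ.comp (S' x)) x := Φ.hasFDerivAt.comp x (hS x)
  have hsymm := second_derivative_symmetric hφ hΦS
  -- translate to matrices: M := toMatrix' (S' x) is symmetric
  have hdot : ∀ v w : Fin D → ℝ, S' x v ⬝ᵥ w = S' x w ⬝ᵥ v := by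
    intro v w
    have := hsymm v w
    rw [ContinuousLinearMap.comp_apply, ContinuousLinearMap.comp_apply, hΦapp, hΦapp] at this
    linarith
  set M : Matrix (Fin D) (Fin D) ℝ :=
    LinearMap.toMatrix' ((S' x) : (Fin D → ℝ) →ₗ[ℝ] (Fin D → ℝ)) with hMdef
  have hent : ∀ (i j : Fin D), M i j = S' x (Pi.single j 1) i := by
    intro i j
    have hmv : M *ᵥ Pi.single j 1 = S' x (Pi.single j 1) := by
      simp [hMdef, ← Matrix.toLin'_apply]
    rw [← hmv]
    simp [Matrix.mulVec_single]
  have hMsymm : Mᵀ = M := by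
    ext i j
    rw [Matrix.transpose_apply, hent j i, hent i j]
    have := hdot (Pi.single i 1) (Pi.single j 1)
    simpa [dotProduct_single] using this
  have hM : M = G * F - 1 := by
    have hco : ((S' x) : (Fin D → ℝ) →ₗ[ℝ] (Fin D → ℝ))
        = ((fderiv ℝ g (f x) : (Fin d → ℝ) →ₗ[ℝ] (Fin D → ℝ)).comp
            (fderiv ℝ f x : (Fin D → ℝ) →ₗ[ℝ] (Fin d → ℝ)) - LinearMap.id) := by
      ext v
      simp [hS'def]
    rw [hMdef, hco, map_sub, LinearMap.toMatrix'_comp, LinearMap.toMatrix'_id]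
  -- chain rule: F * G = 1
  have hFG : F * G = 1 := by
    have hcomp : HasFDerivAt (f ∘ g) ((fderiv ℝ f x).comp (fderiv ℝ g (f x))) (f x) := by
      have h1 : HasFDerivAt f (fderiv ℝ f x) (g (f x)) := by
        rw [hx]; exact (hf x).hasFDerivAt
      exact h1.comp (f x) (hg (f x)).hasFDerivAt
    have hid : HasFDerivAt (f ∘ g) (ContinuousLinearMap.id ℝ (Fin d → ℝ)) (f x) := by
      rw [hfg]; exact hasFDerivAt_id (f x)
    have := hcomp.unique hid
    have hmat := congrArg (fun (T : (Fin d → ℝ) →L[ℝ] (Fin d → ℝ)) =>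
      LinearMap.toMatrix' (T : (Fin d → ℝ) →ₗ[ℝ] (Fin d → ℝ))) this
    simpa [LinearMap.toMatrix'_comp, hFdef, hGdef] using hmat
  -- conclude
  have hMG : M * G = 0 := by
    rw [hM, Matrix.sub_mul, Matrix.mul_assoc, hFG, Matrix.mul_one, Matrix.one_mul, sub_self]
  have hGtM : Gᵀ * M = 0 := by
    calc Gᵀ * M = Gᵀ * Mᵀ := by rw [hMsymm]
    _ = (M * G)ᵀ := by rw [Matrix.transpose_mul]
    _ = 0 := by rw [hMG]; simp
  have hGGF : Gᵀ * G * F = Gᵀ := by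
    have : Gᵀ * (G * F - 1) = 0 := by rw [← hM]; exact hGtM
    rw [Matrix.mul_sub, Matrix.mul_one, sub_eq_zero] at this
    rw [Matrix.mul_assoc, this]
  calc F = (Gᵀ * G)⁻¹ * (Gᵀ * G) * F := by rw [Matrix.nonsing_inv_mul _ hrank, Matrix.one_mul]
  _ = (Gᵀ * G)⁻¹ * (Gᵀ * G * F) := by rw [Matrix.mul_assoc]
  _ = (Gᵀ * G)⁻¹ * Gᵀ := by rw [hGGF]
end
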